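/- Let q be a prime power, n ≥ m ≥ j ≥ 0 and r with max{0, r+m-n} ≤ j ≤ r ≤ n. Fix an m-dimensional subspace P₀ of F_q^n and a j-dimensional subspace Q₀ ⊆ P₀. Then the number of r-dimensional subspaces Q of F_q^n with Q ∩ P₀ = Q₀ equals q^{(r-j)(m-j)} · [n-m choose r-j]_q. -/

import Mathlib

/-!
A subspace `Q` with `Q ⊓ P₀ = Q₀` contains `Q₀`, so passing to `V ⧸ Q₀` such subspaces correspond
to `(r - j)`-dimensional subspaces `W` meeting `U = P₀ / Q₀` trivially. These are counted by
double counting ordered bases: a `k`-tuple spans such a `W` (as a basis of it) exactly when its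
image in `(V ⧸ Q₀) ⧸ U` is linearly independent, which happens for
`q ^ (d * k) * ∏ i < k, (q ^ (n - m) - q ^ i)` tuples (`d = dim U`, the factor `q ^ (d * k)` counting
the lifts), while each `W` has `∏ i < k, (q ^ k - q ^ i)` ordered bases. The quotient of the two
products is the Gaussian binomial.
-/

open Module

/-- The Gaussian binomial coefficient `[a choose b]_q` as a rational number. -/
noncomputable def gbin (q : ℚ) (a b : ℕ) : ℚ :=
  if a < b then 0
  else (∏ t ∈ Finset.Icc (a - b + 1) a, (q ^ t - 1)) / ∏ t ∈ Finset.Icc 1 b, (q ^ t - 1)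

open Finset in
theorem prod_range_pow_sub_pow {R : Type*} [CommRing R] (q : R) {b k : ℕ} (hk : k ≤ b) :
    ∏ i ∈ range k, (q ^ b - q ^ i)
      = (∏ i ∈ range k, q ^ i) * ∏ t ∈ Icc (b - k + 1) b, (q ^ t - 1) := by
  have hfactor : ∀ i ∈ range k, q ^ b - q ^ i = q ^ i * (q ^ (b - i) - 1) := fun i hi => by
    rw [mul_sub, mul_one, ← pow_add, Nat.add_sub_cancel' (by grind)]
  rw [prod_congr rfl hfactor, prod_mul_distrib]
  congr 1
  refine prod_nbij' (b - ·) (b - ·) ?_ ?_ ?_ ?_ fun _ _ => rfl <;> intro i hi <;> grind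

theorem gbin_mul_prod_range {q : ℚ} (hq : 1 < q) {a k : ℕ} (hk : k ≤ a) :
    gbin q a k * ∏ i ∈ Finset.range k, (q ^ k - q ^ i) = ∏ i ∈ Finset.range k, (q ^ a - q ^ i) := by
  have hden : ∏ t ∈ Finset.Icc 1 k, (q ^ t - 1) ≠ 0 :=
    Finset.prod_ne_zero_iff.mpr fun t ht =>
      sub_ne_zero.mpr (one_lt_pow₀ hq (by grind)).ne'
  rw [gbin, if_neg (not_lt.mpr hk), prod_range_pow_sub_pow _ hk, prod_range_pow_sub_pow _ le_rfl,
    Nat.sub_self]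
  field_simp

theorem cast_prod_pow_sub_pow {q : ℕ} (hq : 0 < q) {a k : ℕ} (hk : k ≤ a) :
    ((∏ i : Fin k, (q ^ a - q ^ (i : ℕ)) : ℕ) : ℚ) =
      ∏ i ∈ Finset.range k, ((q : ℚ) ^ a - q ^ i) := by
  rw [Fin.prod_univ_eq_prod_range (fun i => q ^ a - q ^ i), Nat.cast_prod]
  refine Finset.prod_congr rfl fun i hi => ?_
  rw [Nat.cast_sub (Nat.pow_le_pow_right hq (by grind)), Nat.cast_pow, Nat.cast_pow]

theorem Nat.card_subtype_pi_of_fst {ι V A B : Type*} [Fintype ι] (e : V ≃ A × B)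
    (P : (ι → A) → Prop) :
    Nat.card {s : ι → V // P fun i => (e (s i)).1} =
      Nat.card {t : ι → A // P t} * Nat.card B ^ Fintype.card ι := by
  let e' : (ι → V) ≃ (ι → A) × (ι → B) :=
    (Equiv.arrowCongr (Equiv.refl ι) e).trans (Equiv.arrowProdEquivProdArrow _ _ _)
  refine (Nat.card_congr ((e'.subtypeEquiv fun _ => Iff.rfl).trans
    Equiv.prodSubtypeFstEquivSubtypeProd)).trans ?_
  rw [Nat.card_prod, Nat.card_fun, Nat.card_eq_fintype_card (α := ι)]

theorem Nat.card_eq_card_mul_of_card_fiber {α β : Type*} [Finite α] [Finite β] (f : α → β)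
    {n : ℕ} (h : ∀ b, Nat.card {a // f a = b} = n) : Nat.card α = Nat.card β * n := by
  have := Fintype.ofFinite β
  rw [Nat.card_congr (Equiv.sigmaFiberEquiv f).symm, Nat.card_sigma,
    Finset.sum_congr rfl fun b _ => h b, Finset.sum_const,
    Finset.card_univ, smul_eq_mul, Nat.card_eq_fintype_card]

section Subspaces

variable {K V : Type*} [DivisionRing K] [AddCommGroup V] [Module K V]

theorem Submodule.exists_equiv_quotient_prod (U : Submodule K V) :
    ∃ e : V ≃ (V ⧸ U) × U, ∀ v, (e v).1 = U.mkQ v := by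
  obtain ⟨C, hC⟩ := U.exists_isCompl
  refine ⟨((C.prodEquivOfIsCompl U hC.symm).symm.trans
    ((U.quotientEquivOfIsCompl C hC).symm.prodCongr (LinearEquiv.refl K U))).toEquiv, fun v => ?_⟩
  simpa using ((Submodule.Quotient.eq U).mpr (Submodule.sub_projection_mem hC.symm v)).symm

theorem Submodule.finrank_map_mkQ_add_finrank [FiniteDimensional K V] {B A : Submodule K V}
    (h : B ≤ A) : finrank K (A.map B.mkQ) + finrank K B = finrank K A := by
  have h1 := LinearMap.finrank_range_add_finrank_ker (B.mkQ.comp A.subtype)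
  rwa [LinearMap.range_comp, Submodule.range_subtype, LinearMap.ker_comp, Submodule.ker_mkQ,
    (Submodule.comapSubtypeEquivOfLe h).finrank_eq] at h1

theorem card_inf_eq_eq_card_disjoint_subspaces [FiniteDimensional K V] {Q₀ P₀ : Submodule K V}
    (hQP : Q₀ ≤ P₀) (r : ℕ) :
    Nat.card {Q : Submodule K V // finrank K Q = r ∧ Q ⊓ P₀ = Q₀} =
      Nat.card {W : Submodule K (V ⧸ Q₀) //
        finrank K W + finrank K Q₀ = r ∧ Disjoint W (P₀.map Q₀.mkQ)} := by
  have hsurj := Q₀.mkQ_surjective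
  have hcomap : ∀ W : Submodule K (V ⧸ Q₀), W ⊓ P₀.map Q₀.mkQ = ⊥ ↔ W.comap Q₀.mkQ ⊓ P₀ = Q₀ :=
    fun W => by
      rw [← (Submodule.comap_injective_of_surjective hsurj).eq_iff, Submodule.comap_inf,
        Submodule.comap_map_mkQ, sup_eq_right.mpr hQP, Submodule.comap_bot, Submodule.ker_mkQ]
  have hfinrank : ∀ W : Submodule K (V ⧸ Q₀),
      finrank K (W.comap Q₀.mkQ) = finrank K W + finrank K Q₀ := fun W => by
    rw [← Submodule.finrank_map_mkQ_add_finrank (Q₀.le_comap_mkQ W),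
      Submodule.map_comap_eq_of_surjective hsurj]
  symm
  refine Nat.card_congr <| ((Submodule.comapMkQRelIso Q₀).toEquiv.subtypeEquiv fun W => ?_).trans <|
    (Equiv.subtypeSubtypeEquivSubtypeInter _ _).trans <|
    Equiv.subtypeEquivRight fun Q =>
      and_iff_right_of_imp fun h => Set.mem_Ici.mpr (h.2 ▸ inf_le_left)
  rw [disjoint_iff, hcomap, ← hfinrank]
  rfl

variable [Fintype K] [Finite V]

local notation "q" => Fintype.card K

theorem card_linearIndependent_mkQ_comp (U : Submodule K V) {k : ℕ}
    (hk : k ≤ finrank K (V ⧸ U)) :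
    Nat.card {s : Fin k → V // LinearIndependent K (U.mkQ ∘ s)} =
      q ^ (finrank K U * k) * ∏ i : Fin k, (q ^ finrank K (V ⧸ U) - q ^ (i : ℕ)) := by
  obtain ⟨e, he⟩ := U.exists_equiv_quotient_prod
  have : Finite (V ⧸ U) := Module.finite_of_finite K
  have hsplit := Nat.card_subtype_pi_of_fst e fun t : Fin k → V ⧸ U => LinearIndependent K t
  simp only [he] at hsplit
  simp only [Function.comp_def]
  rw [hsplit, card_linearIndependent hk, natCard_eq_pow_finrank (K := K),
    Nat.card_eq_fintype_card (α := K), Fintype.card_fin, ← pow_mul, mul_comm]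

theorem card_linearIndependent_span_eq (W : Submodule K V) {k : ℕ} (hW : finrank K W = k) :
    Nat.card {s : Fin k → V // LinearIndependent K s ∧ Submodule.span K (Set.range s) = W} =
      ∏ i : Fin k, (q ^ k - q ^ (i : ℕ)) := by
  subst hW
  rw [← card_linearIndependent (K := K) (V := W) le_rfl]
  symm
  refine Nat.card_congr
    { toFun := fun t => ⟨W.subtype ∘ t.1, t.2.map' _ W.ker_subtype, ?_⟩
      invFun := fun s => ⟨fun i => ⟨s.1 i, s.2.2.le (Submodule.subset_span (Set.mem_range_self i))⟩,
        s.2.1.of_comp W.subtype⟩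
      left_inv := fun _ => rfl
      right_inv := fun _ => rfl }
  rw [Set.range_comp, Submodule.span_image,
    t.2.span_eq_top_of_card_eq_finrank' (Fintype.card_fin _), Submodule.map_subtype_top]

theorem card_disjoint_subspaces_mul_prod (U : Submodule K V) (k : ℕ) :
    Nat.card {W : Submodule K V // finrank K W = k ∧ Disjoint W U} *
        ∏ i : Fin k, (q ^ k - q ^ (i : ℕ)) =
      Nat.card {s : Fin k → V // LinearIndependent K (U.mkQ ∘ s)} := by
  let φ : {s : Fin k → V // LinearIndependent K (U.mkQ ∘ s)} →
      {W : Submodule K V // finrank K W = k ∧ Disjoint W U} := fun s =>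
    ⟨Submodule.span K (Set.range s.1),
      by rw [finrank_span_eq_card (s.2.of_comp _), Fintype.card_fin],
      by simpa using Submodule.range_ker_disjoint s.2⟩
  have hfiber : ∀ W, Nat.card {s // φ s = W} = ∏ i : Fin k, (q ^ k - q ^ (i : ℕ)) := fun W => by
    rw [← card_linearIndependent_span_eq W.1 W.2.1]
    refine Nat.card_congr <| (Equiv.subtypeEquivRight fun s => Subtype.ext_iff).trans <|
      (Equiv.subtypeSubtypeEquivSubtypeInter (fun s => LinearIndependent K (U.mkQ ∘ s))
        (fun s => Submodule.span K (Set.range s) = W.1)).trans <|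
      Equiv.subtypeEquivRight fun s => ?_
    refine and_congr_left fun hspan => U.mkQ.linearIndependent_iff_of_disjoint ?_
    simpa [hspan] using W.2.2
  rw [Nat.card_eq_card_mul_of_card_fiber φ hfiber]

theorem card_disjoint_subspaces_eq (U : Submodule K V) {k : ℕ} (hk : k ≤ finrank K (V ⧸ U)) :
    (Nat.card {W : Submodule K V // finrank K W = k ∧ Disjoint W U} : ℚ) =
      (q : ℚ) ^ (finrank K U * k) * gbin q (finrank K (V ⧸ U)) k := by
  have hq : (1 : ℚ) < q := by exact_mod_cast Fintype.one_lt_card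
  have hcount := congrArg (Nat.cast : ℕ → ℚ) <|
    (card_disjoint_subspaces_mul_prod U k).trans (card_linearIndependent_mkQ_comp U hk)
  push_cast [cast_prod_pow_sub_pow Fintype.card_pos le_rfl,
    cast_prod_pow_sub_pow Fintype.card_pos hk] at hcount
  have hne : ∏ i ∈ Finset.range k, ((q : ℚ) ^ k - q ^ i) ≠ 0 :=
    Finset.prod_ne_zero_iff.mpr fun i hi =>
      sub_ne_zero.mpr (pow_lt_pow_right₀ hq (Finset.mem_range.mp hi)).ne'
  rw [← mul_left_inj' hne, hcount, mul_assoc, gbin_mul_prod_range hq hk]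

end Subspaces

theorem stmt_1_general (q n m j r : ℕ)
    (F : Type*) [Field F] [Fintype F] (hF : Fintype.card F = q)
    (V : Type*) [AddCommGroup V] [Module F V] [FiniteDimensional F V]
    (hV : finrank F V = n)
    (hjr : j ≤ r)
    (hmax : (r : ℤ) + m - n ≤ j)
    (P₀ Q₀ : Submodule F V) (hP₀ : finrank F P₀ = m) (hQ₀ : finrank F Q₀ = j)
    (hQP : Q₀ ≤ P₀) :
    (Nat.card {Q : Submodule F V // finrank F Q = r ∧ Q ⊓ P₀ = Q₀} : ℚ)
      = q ^ ((r - j) * (m - j)) * gbin q (n - m) (r - j) := by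
  have : Finite (V ⧸ Q₀) := Module.finite_of_finite F
  set U := P₀.map Q₀.mkQ
  have hU : finrank F U + j = m := hQ₀ ▸ hP₀ ▸ Submodule.finrank_map_mkQ_add_finrank hQP
  have hVQ₀ : finrank F (V ⧸ Q₀) + j = n := hQ₀ ▸ hV ▸ Q₀.finrank_quotient_add_finrank
  have hVQ₀U : finrank F ((V ⧸ Q₀) ⧸ U) + finrank F U = finrank F (V ⧸ Q₀) :=
    U.finrank_quotient_add_finrank
  have hquot : finrank F ((V ⧸ Q₀) ⧸ U) = n - m := by omega
  have hk : r - j ≤ finrank F ((V ⧸ Q₀) ⧸ U) := by omega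
  rw [card_inf_eq_eq_card_disjoint_subspaces hQP, hQ₀]
  simp_rw [show ∀ d, d + j = r ↔ d = r - j by omega]
  rw [card_disjoint_subspaces_eq U hk, hF, hquot, show finrank F U = m - j by omega,
    mul_comm (m - j)]

theorem stmt_1 (q n m j r : ℕ) (p e : ℕ) (hp : p.Prime) (hq : q = p ^ e) (he : 1 ≤ e)
    (F : Type*) [Field F] [Fintype F] (hF : Fintype.card F = q)
    (V : Type*) [AddCommGroup V] [Module F V] [FiniteDimensional F V]
    (hV : finrank F V = n)
    (hmn : m ≤ n) (hjm : j ≤ m) (hjr : j ≤ r) (hrn : r ≤ n)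
    (hmax : (r : ℤ) + m - n ≤ j)
    (P₀ Q₀ : Submodule F V) (hP₀ : finrank F P₀ = m) (hQ₀ : finrank F Q₀ = j)
    (hQP : Q₀ ≤ P₀) :
    (Nat.card {Q : Submodule F V // finrank F Q = r ∧ Q ⊓ P₀ = Q₀} : ℚ)
      = q ^ ((r - j) * (m - j)) * gbin q (n - m) (r - j) :=
  stmt_1_general q n m j r F hF V hV hjr hmax P₀ Q₀ hP₀ hQ₀ hQP
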